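/- arXiv:2103.10261 — 2 statements merged into one kernel-verified Lean document; each statement's English description precedes it below -/
import Mathlib

section
/- Let d₁, d₂, d₃ be even integers with dᵢ ≥ 4 and let ε ∈ (0, 1/2). Then there is a constant C > 0 (depending on ε and the dᵢ) such that for every c ∈ ℝ∖{0}: ∫_{(ℝ^×)³} max(1, |a₁|)^{1−d₁/2} · max(1, |[a]/c|, |a|)^{1−d₂/2−d₃/2} · {a}^{d/2−1} d^×a ≤ C · min(1, |c|)^{min(d₁,d₂,d₃)/2 − 1 − ε}. (Lemma 9.10 of the paper, archimedean case F = ℝ.) -/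
/-!
The integrand is bounded pointwise by `|c|^α` times a product `w₁(a₁) w₂(a₂) w₃(a₃)` of
one-variable weights behaving like `|x|^q` at `0` and like `|x|^(-η)` at `∞`, with `q, η > 0`,
so that each `wᵢ` is `d^×x`-integrable. The bound comes from estimating the factor
`max(1, |[a]/c|, |a|)^(1 - D₂ - D₃)`, `Dᵢ = dᵢ/2`, by spending a power `α` of it on `|[a]/c|`
and the rest on `max(1, |aᵢ|)`. Any `0 ≤ α < min Dᵢ - 1` is admissible: `α = min Dᵢ - 1 - ε`
gives the claim for `|c| ≤ 1`, and `α = 0` for `|c| > 1`.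
-/

open MeasureTheory

noncomputable section

/-- The multiplicative Haar measure `d^×a = da/|a|` on `ℝ^× = ℝ ∖ {0}`. -/
def mulHaar : Measure ℝ := volume.withDensity fun a => ENNReal.ofReal |a|⁻¹

/-- The product measure `d^×a₁ d^×a₂ d^×a₃` on `(ℝ^×)³`. -/
def mulHaar3 : Measure (ℝ × ℝ × ℝ) := mulHaar.prod (mulHaar.prod mulHaar)

open Set
open scoped ENNReal

instance : SigmaFinite mulHaar := by unfold mulHaar; infer_instance

theorem lintegral_comp_abs (f : ℝ → ℝ≥0∞) :
    ∫⁻ x, f |x| = 2 * ∫⁻ x in Ioi 0, f x := by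
  have h_pos : ∫⁻ x in Ioi 0, f |x| = ∫⁻ x in Ioi 0, f x :=
    setLIntegral_congr_fun measurableSet_Ioi fun x hx => by rw [abs_of_pos hx]
  have h_neg : ∫⁻ x in Iic 0, f |x| = ∫⁻ x in Ioi 0, f |x| := by
    have := (Measure.measurePreserving_neg volume).setLIntegral_comp_preimage_emb
      measurableEmbedding_neg (fun x => f |x|) (Iio 0)
    simp only [neg_preimage, neg_Iio, neg_zero, abs_neg] at this
    rw [setLIntegral_congr Iio_ae_eq_Iic.symm, this]
  rw [← lintegral_add_compl _ measurableSet_Ioi, compl_Ioi, h_neg, h_pos, two_mul]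

theorem lintegral_mulHaar3_mul {f g h : ℝ → ℝ≥0∞} (hf : AEMeasurable f mulHaar)
    (hg : AEMeasurable g mulHaar) (hh : AEMeasurable h mulHaar) :
    ∫⁻ a, f a.1 * (g a.2.1 * h a.2.2) ∂mulHaar3 =
      (∫⁻ x, f x ∂mulHaar) * ((∫⁻ y, g y ∂mulHaar) * ∫⁻ z, h z ∂mulHaar) := by
  have hgh : AEMeasurable (fun b : ℝ × ℝ => g b.1 * h b.2) (mulHaar.prod mulHaar) := by fun_prop
  rw [mulHaar3, lintegral_prod_mul hf hgh, lintegral_prod_mul hg hh]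

def powWeight (q η x : ℝ) : ℝ := |x| ^ q / max 1 |x| ^ (q + η)

theorem powWeight_nonneg (q η x : ℝ) : 0 ≤ powWeight q η x := by
  unfold powWeight; positivity

@[fun_prop]
theorem measurable_powWeight (q η : ℝ) : Measurable (powWeight q η) := by
  unfold powWeight; fun_prop

theorem lintegral_powWeight_lt_top {q η : ℝ} (hq : 0 < q) (hη : 0 < η) :
    ∫⁻ x, ENNReal.ofReal (powWeight q η x) ∂mulHaar < ∞ := by
  set g : ℝ → ℝ≥0∞ := fun y => ENNReal.ofReal (y⁻¹ * powWeight q η y)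
  have h_even : ∫⁻ x, ENNReal.ofReal (powWeight q η x) ∂mulHaar = ∫⁻ x, g |x| := by
    rw [mulHaar, lintegral_withDensity_eq_lintegral_mul _ (by fun_prop) (by fun_prop)]
    refine lintegral_congr fun x => ?_
    simp only [g, Pi.mul_apply, powWeight, abs_abs]
    rw [ENNReal.ofReal_mul (by positivity)]
  have h_small : ∀ y ∈ Ioc (0 : ℝ) 1, g y = ENNReal.ofReal (y ^ (q - 1)) := by
    rintro y ⟨hy0, hy1⟩
    simp only [g, powWeight, abs_of_pos hy0, max_eq_left hy1, Real.one_rpow, div_one,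
      Real.rpow_sub_one hy0.ne', inv_mul_eq_div]
  have h_large : ∀ y ∈ Ioi (1 : ℝ), g y = ENNReal.ofReal (y ^ (-η - 1)) := by
    intro y (hy : 1 < y)
    have hy0 : 0 < y := one_pos.trans hy
    simp only [g, powWeight, abs_of_pos hy0, max_eq_right hy.le]
    rw [Real.rpow_sub_one hy0.ne', Real.rpow_neg hy0.le, Real.rpow_add hy0]
    field_simp
  have h_Ioc : ∫⁻ y in Ioc 0 1, g y < ∞ := by
    rw [setLIntegral_congr_fun measurableSet_Ioc h_small, setLIntegral_congr Ioo_ae_eq_Ioc.symm]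
    exact ((intervalIntegral.integrableOn_Ioo_rpow_iff zero_lt_one).2 (by linarith))
      |>.setLIntegral_lt_top
  have h_Ioi : ∫⁻ y in Ioi 1, g y < ∞ := by
    rw [setLIntegral_congr_fun measurableSet_Ioi h_large]
    exact (integrableOn_Ioi_rpow_of_lt (by linarith) zero_lt_one).setLIntegral_lt_top
  rw [h_even, lintegral_comp_abs, ← Ioc_union_Ioi_eq_Ioi zero_le_one,
    lintegral_union measurableSet_Ioi (Ioc_disjoint_Ioi le_rfl)]
  exact ENNReal.mul_lt_top (by simp) (ENNReal.add_lt_top.2 ⟨h_Ioc, h_Ioi⟩)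

theorem rpow_neg_le_mul_rpow_neg {M s u₁ u₂ u₃ u₄ e₁ e₂ e₃ e₄ : ℝ} (hM : 1 ≤ M)
    (hu₁ : 0 < u₁) (hu₂ : 0 < u₂) (hu₃ : 0 < u₃) (hu₄ : 0 < u₄)
    (hu₁M : u₁ ≤ M) (hu₂M : u₂ ≤ M) (hu₃M : u₃ ≤ M) (hu₄M : u₄ ≤ M)
    (he₁ : 0 ≤ e₁) (he₂ : 0 ≤ e₂) (he₃ : 0 ≤ e₃) (he₄ : 0 ≤ e₄) (hs : e₁ + e₂ + e₃ + e₄ ≤ s) :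
    M ^ (-s) ≤ u₁ ^ (-e₁) * u₂ ^ (-e₂) * u₃ ^ (-e₃) * u₄ ^ (-e₄) := calc
  M ^ (-s) ≤ M ^ (-e₁ + -e₂ + -e₃ + -e₄) := Real.rpow_le_rpow_of_exponent_le hM (by linarith)
  _ = M ^ (-e₁) * M ^ (-e₂) * M ^ (-e₃) * M ^ (-e₄) := by
    simp only [Real.rpow_add (zero_lt_one.trans_le hM)]
  _ ≤ _ := by
    gcongr ?_ * ?_ * ?_ * ?_ <;> exact Real.rpow_le_rpow_of_nonpos ‹_› ‹_› (by linarith)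

/-- The integrand of the theorem, with `Dᵢ = dᵢ/2`. -/
def integrand (D₁ D₂ D₃ c : ℝ) (a : ℝ × ℝ × ℝ) : ℝ :=
  max 1 |a.1| ^ (1 - D₁) *
    max (max 1 |a.1 * a.2.1 * a.2.2 / c|) (max |a.1| (max |a.2.1| |a.2.2|)) ^ (1 - D₂ - D₃) *
    (|a.1| ^ (D₁ - 1) * |a.2.1| ^ (D₂ - 1) * |a.2.2| ^ (D₃ - 1))

theorem integrand_le_mul_powWeight {D₁ D₂ D₃ α c : ℝ} (hα : 0 ≤ α) (h₁ : α < D₁ - 1)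
    (h₂ : α < D₂ - 1) (h₃ : α < D₃ - 1) (hc : c ≠ 0) (a : ℝ × ℝ × ℝ) :
    integrand D₁ D₂ D₃ c a ≤ |c| ^ α * (powWeight (D₁ - 1 - α) (α + 1 / 3) a.1 *
      (powWeight (D₂ - 1 - α) (1 / 3) a.2.1 * powWeight (D₃ - 1 - α) (1 / 3) a.2.2)) := by
  obtain ⟨x, y, z⟩ := a
  by_cases hzero : x = 0 ∨ y = 0 ∨ z = 0
  · have hvanish : |x| ^ (D₁ - 1) * |y| ^ (D₂ - 1) * |z| ^ (D₃ - 1) = 0 := by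
      rcases hzero with rfl | rfl | rfl <;> simp [Real.zero_rpow, (by linarith : D₁ - 1 ≠ 0),
        (by linarith : D₂ - 1 ≠ 0), (by linarith : D₃ - 1 ≠ 0)]
    rw [integrand, hvanish, mul_zero]
    unfold powWeight
    positivity
  obtain ⟨hx, hy, hz⟩ := not_or.1 hzero |>.imp_right not_or.1
  have hx' : 0 < |x| := abs_pos.2 hx
  have hy' : 0 < |y| := abs_pos.2 hy
  have hz' : 0 < |z| := abs_pos.2 hz
  have hc' : 0 < |c| := abs_pos.2 hc
  have hxyz : 0 < |x| * |y| * |z| := mul_pos (mul_pos hx' hy') hz'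
  have hA (t : ℝ) : 0 < max 1 t := zero_lt_one.trans_le (le_max_left _ _)
  rw [integrand]
  set M := max (max 1 |x * y * z / c|) (max |x| (max |y| |z|))
  have hM : 1 ≤ M := le_max_of_le_left (le_max_left _ _)
  -- The exponents `α, 1/3, D₂ - 1 - α + 1/3, D₃ - 1 - α + 1/3` add up to `D₂ + D₃ - 1 - α`,
  -- and the spare `1/3`s give every weight decay at `∞`.
  have key : M ^ (1 - D₂ - D₃) ≤ |x * y * z / c| ^ (-α) * max 1 |x| ^ (-(1 / 3 : ℝ)) *
      max 1 |y| ^ (-(D₂ - 1 - α + 1 / 3)) * max 1 |z| ^ (-(D₃ - 1 - α + 1 / 3)) := by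
    rw [show 1 - D₂ - D₃ = -(D₂ + D₃ - 1) by ring]
    refine rpow_neg_le_mul_rpow_neg hM (by positivity) (by positivity) (by positivity)
      (by positivity) (le_max_of_le_left (le_max_right _ _))
      (max_le hM (le_max_of_le_right (le_max_left _ _)))
      (max_le hM (le_max_of_le_right (le_max_of_le_right (le_max_left _ _))))
      (max_le hM (le_max_of_le_right (le_max_of_le_right (le_max_right _ _))))
      hα (by norm_num) (by linarith) (by linarith) (by linarith)
  calc _ ≤ max 1 |x| ^ (1 - D₁) * (|x * y * z / c| ^ (-α) * max 1 |x| ^ (-(1 / 3 : ℝ)) *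
      max 1 |y| ^ (-(D₂ - 1 - α + 1 / 3)) * max 1 |z| ^ (-(D₃ - 1 - α + 1 / 3))) *
        (|x| ^ (D₁ - 1) * |y| ^ (D₂ - 1) * |z| ^ (D₃ - 1)) := by gcongr
    _ = _ := by
      rw [abs_div, abs_mul, abs_mul, Real.rpow_def_of_pos (div_pos hxyz hc'),
        Real.log_div hxyz.ne' hc'.ne', Real.log_mul (mul_pos hx' hy').ne' hz'.ne',
        Real.log_mul hx'.ne' hy'.ne']
      simp only [powWeight, Real.rpow_def_of_pos, hx', hy', hz', hc', ← Real.exp_add,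
        ← Real.exp_sub, hA]
      congr 1
      ring

theorem exists_lintegral_integrand_le {D₁ D₂ D₃ α : ℝ} (hα : 0 ≤ α) (h₁ : α < D₁ - 1)
    (h₂ : α < D₂ - 1) (h₃ : α < D₃ - 1) :
    ∃ P : ℝ, ∀ c : ℝ, c ≠ 0 →
      ∫⁻ a, ENNReal.ofReal (integrand D₁ D₂ D₃ c a) ∂mulHaar3 ≤ ENNReal.ofReal (P * |c| ^ α) := by
  set w₁ := fun x => ENNReal.ofReal (powWeight (D₁ - 1 - α) (α + 1 / 3) x)
  set w₂ := fun y => ENNReal.ofReal (powWeight (D₂ - 1 - α) (1 / 3) y)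
  set w₃ := fun z => ENNReal.ofReal (powWeight (D₃ - 1 - α) (1 / 3) z)
  set K := (∫⁻ x, w₁ x ∂mulHaar) * ((∫⁻ y, w₂ y ∂mulHaar) * ∫⁻ z, w₃ z ∂mulHaar)
  have hK : K ≠ ∞ := ENNReal.mul_ne_top
    (lintegral_powWeight_lt_top (by linarith) (by linarith)).ne
    (ENNReal.mul_ne_top (lintegral_powWeight_lt_top (by linarith) (by norm_num)).ne
      (lintegral_powWeight_lt_top (by linarith) (by norm_num)).ne)
  refine ⟨K.toReal, fun c hc => ?_⟩
  calc ∫⁻ a, ENNReal.ofReal (integrand D₁ D₂ D₃ c a) ∂mulHaar3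
      ≤ ∫⁻ a, ENNReal.ofReal (|c| ^ α) * (w₁ a.1 * (w₂ a.2.1 * w₃ a.2.2)) ∂mulHaar3 := by
        refine lintegral_mono fun a => ?_
        simp only [w₁, w₂, w₃, ← ENNReal.ofReal_mul (powWeight_nonneg _ _ _),
          ← ENNReal.ofReal_mul (Real.rpow_nonneg (abs_nonneg c) α)]
        exact ENNReal.ofReal_le_ofReal (integrand_le_mul_powWeight hα h₁ h₂ h₃ hc a)
    _ = ENNReal.ofReal (|c| ^ α) * K := by
        rw [lintegral_const_mul' _ _ ENNReal.ofReal_ne_top,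
          lintegral_mulHaar3_mul (by fun_prop) (by fun_prop) (by fun_prop)]
    _ = ENNReal.ofReal (K.toReal * |c| ^ α) := by
        rw [mul_comm, ENNReal.ofReal_mul ENNReal.toReal_nonneg, ENNReal.ofReal_toReal hK]

theorem stmt14_general
    (d₁ d₂ d₃ : ℕ)
    (hd₁ : 4 ≤ d₁) (hd₂ : 4 ≤ d₂) (hd₃ : 4 ≤ d₃)
    (ε : ℝ) (hε0 : 0 < ε) (hε : ε < 1 / 2) :
    ∃ C : ℝ, 0 < C ∧
      ∀ c : ℝ, c ≠ 0 →
        (∫⁻ a : ℝ × ℝ × ℝ, ENNReal.ofReal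
            (max 1 |a.1| ^ (1 - (d₁ : ℝ) / 2) *
              max (max 1 |a.1 * a.2.1 * a.2.2 / c|) (max |a.1| (max |a.2.1| |a.2.2|)) ^
                (1 - (d₂ : ℝ) / 2 - (d₃ : ℝ) / 2) *
              (|a.1| ^ ((d₁ : ℝ) / 2 - 1) * |a.2.1| ^ ((d₂ : ℝ) / 2 - 1) *
                |a.2.2| ^ ((d₃ : ℝ) / 2 - 1))) ∂mulHaar3)
        ≤ ENNReal.ofReal
            (C * min 1 |c| ^ ((min d₁ (min d₂ d₃) : ℝ) / 2 - 1 - ε)) := by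
  have h₁ : (4 : ℝ) ≤ d₁ := by exact_mod_cast hd₁
  have h₂ : (4 : ℝ) ≤ d₂ := by exact_mod_cast hd₂
  have h₃ : (4 : ℝ) ≤ d₃ := by exact_mod_cast hd₃
  have hmin₁ : (min d₁ (min d₂ d₃) : ℝ) ≤ d₁ := min_le_left _ _
  have hmin₂ : (min d₁ (min d₂ d₃) : ℝ) ≤ d₂ := (min_le_right _ _).trans (min_le_left _ _)
  have hmin₃ : (min d₁ (min d₂ d₃) : ℝ) ≤ d₃ := (min_le_right _ _).trans (min_le_right _ _)
  have hmin : (4 : ℝ) ≤ (min d₁ (min d₂ d₃) : ℝ) := le_min h₁ (le_min h₂ h₃)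
  obtain ⟨P₁, hP₁⟩ := exists_lintegral_integrand_le (D₁ := d₁ / 2) (D₂ := d₂ / 2) (D₃ := d₃ / 2)
    (α := (min d₁ (min d₂ d₃) : ℝ) / 2 - 1 - ε)
    (by linarith) (by linarith) (by linarith) (by linarith)
  obtain ⟨P₂, hP₂⟩ := exists_lintegral_integrand_le (D₁ := d₁ / 2) (D₂ := d₂ / 2) (D₃ := d₃ / 2)
    (α := 0) le_rfl (by linarith) (by linarith) (by linarith)
  refine ⟨max 1 (max P₁ P₂), lt_max_of_lt_left one_pos, fun c hc => ?_⟩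
  rcases le_or_gt |c| 1 with hc1 | hc1
  · rw [min_eq_right hc1]
    refine (hP₁ c hc).trans (ENNReal.ofReal_le_ofReal ?_)
    gcongr
    exact le_max_of_le_right (le_max_left _ _)
  · rw [min_eq_left hc1.le, Real.one_rpow, mul_one]
    refine (hP₂ c hc).trans (ENNReal.ofReal_le_ofReal ?_)
    rw [Real.rpow_zero, mul_one]
    exact le_max_of_le_right (le_max_right _ _)

/-- Lemma 9.10 (archimedean case `F = ℝ`). -/
theorem stmt14
    (d₁ d₂ d₃ : ℕ) (hd₁e : Even d₁) (hd₂e : Even d₂) (hd₃e : Even d₃)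
    (hd₁ : 4 ≤ d₁) (hd₂ : 4 ≤ d₂) (hd₃ : 4 ≤ d₃)
    (ε : ℝ) (hε0 : 0 < ε) (hε : ε < 1 / 2) :
    ∃ C : ℝ, 0 < C ∧
      ∀ c : ℝ, c ≠ 0 →
        (∫⁻ a : ℝ × ℝ × ℝ, ENNReal.ofReal
            (max 1 |a.1| ^ (1 - (d₁ : ℝ) / 2) *
              max (max 1 |a.1 * a.2.1 * a.2.2 / c|) (max |a.1| (max |a.2.1| |a.2.2|)) ^
                (1 - (d₂ : ℝ) / 2 - (d₃ : ℝ) / 2) *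
              (|a.1| ^ ((d₁ : ℝ) / 2 - 1) * |a.2.1| ^ ((d₂ : ℝ) / 2 - 1) *
                |a.2.2| ^ ((d₃ : ℝ) / 2 - 1))) ∂mulHaar3)
        ≤ ENNReal.ofReal
            (C * min 1 |c| ^ ((min d₁ (min d₂ d₃) : ℝ) / 2 - 1 - ε)) :=
  stmt14_general d₁ d₂ d₃ hd₁ hd₂ hd₃ ε hε0 hε
end
end

section
/- Let d ≥ 1 and let Q be a quadratic form on ℝ^d whose polar bilinear form B(u,w) = Q(u+w) − Q(u) − Q(w) is nondegenerate. Then there exist α > 0 and C > 0 such that for every t with 0 < t < 1: λ( { v ∈ ℝ^d : max_i |v_i| ≤ 1 and |Q(v)| ≤ t } ) ≤ C · t^α, where λ is Lebesgue measure on ℝ^d. (Lemma 10.2 of the paper, archimedean case F = ℝ.) -/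
/-!
Pick `u` with `Q u ≠ 0` and a linear automorphism `T` sending the basis vector `e_k` to `u`.
Along the `k`-th coordinate, `Q ∘ T` is a quadratic polynomial with leading coefficient `Q u`,
and `|a x² + b x + c| ≤ t` holds only on a set of length `O(√(t / |a|))`. Fubini over the other
coordinates and the change of variables by `T` give the bound with exponent `α = 1 / 2`.
-/

open MeasureTheory

open scoped ENNReal

theorem Real.sqrt_add_le_sqrt_add_sqrt (p : ℝ) {r : ℝ} (hr : 0 ≤ r) : √(p + r) ≤ √p + √r := by
  rcases le_total p 0 with hp | hp
  · rw [Real.sqrt_eq_zero'.mpr hp, zero_add]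
    exact Real.sqrt_le_sqrt (by linarith)
  · refine Real.sqrt_le_iff.mpr ⟨by positivity, ?_⟩
    nlinarith [Real.sq_sqrt hp, Real.sq_sqrt hr, Real.sqrt_nonneg p, Real.sqrt_nonneg r]

theorem volume_setOf_sq_mem_Icc_le (p : ℝ) {r : ℝ} (hr : 0 ≤ r) :
    volume {s : ℝ | s ^ 2 ∈ Set.Icc p (p + r)} ≤ ENNReal.ofReal (2 * √r) := by
  have hsub : {s : ℝ | s ^ 2 ∈ Set.Icc p (p + r)} ⊆
      Set.Icc (-√(p + r)) (-√p) ∪ Set.Icc (√p) (√(p + r)) := by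
    rintro s ⟨hlo, hhi⟩
    have hlo' : √p ≤ |s| := Real.sqrt_sq_eq_abs s ▸ Real.sqrt_le_sqrt hlo
    have hhi' : |s| ≤ √(p + r) := Real.sqrt_sq_eq_abs s ▸ Real.sqrt_le_sqrt hhi
    rcases le_total 0 s with hs | hs
    · rw [abs_of_nonneg hs] at hlo' hhi'
      exact Or.inr ⟨hlo', hhi'⟩
    · rw [abs_of_nonpos hs] at hlo' hhi'
      exact Or.inl ⟨by linarith, by linarith⟩
  have hlen : √(p + r) - √p ≤ √r := by linarith [Real.sqrt_add_le_sqrt_add_sqrt p hr]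
  calc volume {s : ℝ | s ^ 2 ∈ Set.Icc p (p + r)}
      ≤ volume (Set.Icc (-√(p + r)) (-√p)) + volume (Set.Icc (√p) (√(p + r))) :=
        (measure_mono hsub).trans (measure_union_le _ _)
    _ = ENNReal.ofReal (√(p + r) - √p) + ENNReal.ofReal (√(p + r) - √p) := by
        rw [Real.volume_Icc, Real.volume_Icc, neg_sub_neg]
    _ ≤ ENNReal.ofReal √r + ENNReal.ofReal √r := by gcongr
    _ = ENNReal.ofReal (2 * √r) := by
        rw [← ENNReal.ofReal_add (by positivity) (by positivity), two_mul]

/-- Completing the square, `|a x² + b x + c| ≤ t` says that `(x + b / 2a)²` lies in an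
interval of length `2 t / |a|`. -/
theorem volume_setOf_abs_quadratic_le {a : ℝ} (ha : a ≠ 0) (b c : ℝ) {t : ℝ} (ht : 0 ≤ t) :
    volume {x : ℝ | |a * x ^ 2 + b * x + c| ≤ t} ≤ ENNReal.ofReal (2 * √(2 * t / |a|)) := by
  set h := b / (2 * a)
  set k := h ^ 2 - c / a
  set r := t / |a|
  have habs : 0 < |a| := abs_pos.mpr ha
  have hsub : {x : ℝ | |a * x ^ 2 + b * x + c| ≤ t} ⊆
      (· + h) ⁻¹' {s : ℝ | s ^ 2 ∈ Set.Icc (k - r) (k - r + 2 * r)} := by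
    intro x hx
    have hsq : a * x ^ 2 + b * x + c = a * ((x + h) ^ 2 - k) := by
      simp only [h, k]; field_simp; ring
    have : |(x + h) ^ 2 - k| ≤ r := by
      rw [le_div_iff₀ habs, mul_comm, ← abs_mul, ← hsq]; exact hx
    obtain ⟨h₁, h₂⟩ := abs_le.mp this
    exact ⟨by linarith, by linarith⟩
  calc volume {x : ℝ | |a * x ^ 2 + b * x + c| ≤ t}
      ≤ volume {s : ℝ | s ^ 2 ∈ Set.Icc (k - r) (k - r + 2 * r)} :=
        (measure_mono hsub).trans_eq (measure_preimage_add_right volume h _)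
    _ ≤ ENNReal.ofReal (2 * √(2 * t / |a|)) := by
        rw [mul_div_assoc]; exact volume_setOf_sq_mem_Icc_le _ (by positivity)

theorem volume_le_of_insertNth_sections_le {n : ℕ} (k : Fin (n + 1))
    {S : Set (Fin (n + 1) → ℝ)} (hS : MeasurableSet S) {B : Set (Fin n → ℝ)}
    (hB : MeasurableSet B) (hSB : ∀ x y, k.insertNth x y ∈ S → y ∈ B) {m : ℝ≥0∞}
    (hm : ∀ y, volume {x : ℝ | k.insertNth x y ∈ S} ≤ m) :
    volume S ≤ m * volume B := by
  have hmp := (volume_preserving_piFinSuccAbove (fun _ : Fin (n + 1) => ℝ) k).symm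
  rw [← hmp.measure_preimage hS.nullMeasurableSet, Measure.volume_eq_prod,
    Measure.prod_apply_symm (hS.preimage (MeasurableEquiv.measurable _)),
    ← setLIntegral_const, ← lintegral_indicator hB]
  refine lintegral_mono fun y => ?_
  have hsection : (fun x => (x, y)) ⁻¹'
      ((MeasurableEquiv.piFinSuccAbove (fun _ => ℝ) k).symm ⁻¹' S) =
      {x : ℝ | k.insertNth x y ∈ S} := by
    ext x; simp [Fin.insertNthEquiv]
  rw [hsection]
  by_cases hy : y ∈ B
  · simpa [hy] using hm y
  · rw [Set.indicator_of_notMem hy]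
    exact (measure_mono_null (fun x hx => hy (hSB x y hx)) (measure_empty (μ := volume))).le

theorem norm_le_norm_insertNth {n : ℕ} (k : Fin (n + 1)) (x : ℝ) (y : Fin n → ℝ) :
    ‖y‖ ≤ ‖(k.insertNth x y : Fin (n + 1) → ℝ)‖ :=
  (pi_norm_le_iff_of_nonneg (norm_nonneg _)).mpr fun i => by
    simpa using norm_le_pi_norm (k.insertNth x y : Fin (n + 1) → ℝ) (k.succAbove i)

theorem Fin.insertNth_eq_smul_single_add {R : Type*} [Semiring R] {n : ℕ} (k : Fin (n + 1))
    (x : R) (y : Fin n → R) : k.insertNth x y = x • Pi.single k 1 + k.insertNth 0 y := by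
  ext j
  induction j using k.succAboveCases <;> simp

theorem volume_setOf_norm_le_abs_le_of_quadratic_insertNth {n : ℕ} (k : Fin (n + 1))
    {f : (Fin (n + 1) → ℝ) → ℝ} (hf : Continuous f) {a : ℝ} (ha : a ≠ 0)
    (b c : (Fin n → ℝ) → ℝ) (hfabc : ∀ x y, f (k.insertNth x y) = a * x ^ 2 + b y * x + c y)
    {R t : ℝ} (hR : 0 ≤ R) (ht : 0 ≤ t) :
    volume {v | ‖v‖ ≤ R ∧ |f v| ≤ t} ≤ ENNReal.ofReal (2 * √(2 * t / |a|) * (2 * R) ^ n) := by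
  rw [ENNReal.ofReal_mul (by positivity)]
  have hball := Real.volume_pi_closedBall (0 : Fin n → ℝ) hR
  rw [Fintype.card_fin] at hball
  rw [← hball]
  refine volume_le_of_insertNth_sections_le k ?_ measurableSet_closedBall ?_ ?_
  · exact ((isClosed_le continuous_norm continuous_const).inter
      (isClosed_le hf.abs continuous_const)).measurableSet
  · exact fun x y hxy => mem_closedBall_zero_iff.mpr ((norm_le_norm_insertNth k x y).trans hxy.1)
  · refine fun y => (measure_mono fun x hx => ?_).trans
      (volume_setOf_abs_quadratic_le ha (b y) (c y) ht)
    simpa [hfabc] using hx.2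

theorem QuadraticMap.continuous_of_finiteDimensional {E : Type*} [NormedAddCommGroup E]
    [NormedSpace ℝ E] [FiniteDimensional ℝ E] (Q : QuadraticForm ℝ E) : Continuous Q := by
  have hlin : Continuous
      (LinearMap.toContinuousLinearMap.toLinearMap ∘ₗ QuadraticMap.associated (R := ℝ) Q) :=
    LinearMap.continuous_of_finiteDimensional _
  simpa [QuadraticMap.associated_eq_self_apply] using hlin.clm_apply continuous_id

theorem QuadraticMap.map_smul_add {R M : Type*} [CommRing R] [AddCommGroup M] [Module R M]
    (Q : QuadraticForm R M) (x : R) (u w : M) :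
    Q (x • u + w) = Q u * x ^ 2 + polar Q u w * x + Q w := by
  rw [QuadraticMap.map_add Q, QuadraticMap.map_smul, polar_smul_left, smul_eq_mul, smul_eq_mul]
  ring

theorem exists_linearEquiv_apply_single_eq {K ι : Type*} [Field K] [DecidableEq ι] {u : ι → K}
    (hu : u ≠ 0) : ∃ k, ∃ T : (ι → K) ≃ₗ[K] (ι → K), T (Pi.single k 1) = u := by
  obtain ⟨k, hk⟩ := Function.ne_iff.mp hu
  have hunit : IsUnit (1 + LinearMap.proj (R := K) k (u - Pi.single k 1)) := by simpa using hk
  exact ⟨k, LinearEquiv.dilatransvection hunit, by simp [LinearEquiv.dilatransvection.apply]⟩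

theorem QuadraticMap.exists_ne_zero_of_polar_nondegenerate {R M : Type*} [CommRing R]
    [AddCommGroup M] [Module R M] [Nontrivial M] {Q : QuadraticForm R M}
    (hQ : ∀ u, (∀ w, polar Q u w = 0) → u = 0) : ∃ u, Q u ≠ 0 := by
  by_contra! hzero
  obtain ⟨u, hu⟩ := exists_ne (0 : M)
  exact hu (hQ u fun w => by simp [polar, hzero])

theorem QuadraticMap.exists_volume_abs_le_le_mul_sqrt {d : ℕ} (Q : QuadraticForm ℝ (Fin d → ℝ))
    {u : Fin d → ℝ} (hu : Q u ≠ 0) : ∃ C : ℝ, ∀ t, 0 ≤ t →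
      volume {v : Fin d → ℝ | ‖v‖ ≤ 1 ∧ |Q v| ≤ t} ≤ ENNReal.ofReal (C * √t) := by
  obtain ⟨k, T, hTk⟩ := exists_linearEquiv_apply_single_eq (u := u) fun h => hu (h ▸ Q.map_zero)
  cases d with
  | zero => exact k.elim0
  | succ n =>
  set M := ‖LinearMap.toContinuousLinearMap T.symm.toLinearMap‖
  have hM : ∀ w, ‖T w‖ ≤ 1 → ‖w‖ ≤ M := fun w hw => by
    simpa using (LinearMap.toContinuousLinearMap T.symm.toLinearMap).le_of_opNorm_le_of_le
      le_rfl hw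
  have hQT : ∀ x y, Q (T (k.insertNth x y)) =
      Q u * x ^ 2 + polar Q u (T (k.insertNth 0 y)) * x + Q (T (k.insertNth 0 y)) := by
    intro x y
    rw [Fin.insertNth_eq_smul_single_add, map_add, map_smul, hTk, QuadraticMap.map_smul_add]
  set D := |LinearMap.det T.toLinearMap|
  have hD : 0 ≤ D := abs_nonneg _
  refine ⟨D * (2 * √(2 / |Q u|) * (2 * M) ^ n), fun t ht => ?_⟩
  set S := {v : Fin (n + 1) → ℝ | ‖v‖ ≤ 1 ∧ |Q v| ≤ t}
  calc volume S = ENNReal.ofReal D * volume (T ⁻¹' S) := by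
        rw [← Measure.addHaar_image_linearMap, LinearEquiv.coe_coe,
          Set.image_preimage_eq S T.surjective]
    _ ≤ ENNReal.ofReal D * volume {w | ‖w‖ ≤ M ∧ |(Q ∘ T) w| ≤ t} := by
        gcongr
        exact fun w hw => ⟨hM w hw.1, hw.2⟩
    _ ≤ ENNReal.ofReal D * ENNReal.ofReal (2 * √(2 * t / |Q u|) * (2 * M) ^ n) := by
        gcongr
        exact volume_setOf_norm_le_abs_le_of_quadratic_insertNth k
          ((QuadraticMap.continuous_of_finiteDimensional Q).comp
            (LinearMap.continuous_of_finiteDimensional T.toLinearMap))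
          hu _ _ hQT (norm_nonneg _) ht
    _ = ENNReal.ofReal (D * (2 * √(2 / |Q u|) * (2 * M) ^ n) * √t) := by
        rw [← ENNReal.ofReal_mul hD, mul_div_right_comm,
          Real.sqrt_mul (by positivity)]
        ring_nf

/-- Lemma 10.2 (archimedean case `F = ℝ`). -/
theorem stmt18
    (d : ℕ) (hd : 1 ≤ d) (Q : QuadraticForm ℝ (Fin d → ℝ))
    (hQ : ∀ u, (∀ w, QuadraticMap.polar (⇑Q) u w = 0) → u = 0) :
    ∃ α : ℝ, 0 < α ∧ ∃ C : ℝ, 0 < C ∧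
      ∀ t : ℝ, 0 < t → t < 1 →
        volume {v : Fin d → ℝ | ‖v‖ ≤ 1 ∧ |Q v| ≤ t} ≤ ENNReal.ofReal (C * t ^ α) := by
  have : NeZero d := ⟨by omega⟩
  obtain ⟨u, hu⟩ := QuadraticMap.exists_ne_zero_of_polar_nondegenerate hQ
  obtain ⟨C, hC⟩ := Q.exists_volume_abs_le_le_mul_sqrt hu
  refine ⟨1 / 2, by norm_num, max C 1, by positivity, fun t ht _ => (hC t ht.le).trans ?_⟩
  rw [← Real.sqrt_eq_rpow]
  gcongr
  exact le_max_left C 1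
end
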